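/- arXiv:2510.04114 — 4 statements merged into one kernel-verified Lean document; each statement's English description precedes it below -/
import Mathlib

section
/- The Wasserstein projection of the empirical distribution onto the fair set equals its projection onto the marginally-constrained fair set: inf_{Q ∈ F_R} W_c²(P̂^N, Q) = inf_{Q ∈ F_R(p̂^N)} W_c²(P̂^N, Q), where both infima are taken in [0,∞]. -/
open MeasureTheory ENNReal Filter
open scoped RealInnerProductSpace BoundedContinuousFunction

noncomputable section

/-- The sample space `Ξ = ℝ^d × {0,1} × ℝ`, with the binary sensitive attribute
encoded as a `Bool`. -/
abbrev Xi (d : ℕ) : Type := EuclideanSpace ℝ (Fin d) × Bool × ℝ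

/-- The extended cost `c(ξ,ξ') = α‖x−x'‖ + ∞·|a−a'| + β|y−y'| ∈ [0,∞]`,
infinite whenever the sensitive attributes differ. -/
def wcost {d : ℕ} (α β : ℝ) (ξ ξ' : Xi d) : ℝ≥0∞ :=
  if ξ.2.1 = ξ'.2.1 then ENNReal.ofReal (α * ‖ξ.1 - ξ'.1‖ + β * |ξ.2.2 - ξ'.2.2|) else ∞

/-- `pl` is a coupling of `P` and `Q`. -/
def IsCoupling {d : ℕ} (pl : Measure (Xi d × Xi d)) (P Q : Measure (Xi d)) : Prop :=
  IsProbabilityMeasure pl ∧ pl.map Prod.fst = P ∧ pl.map Prod.snd = Q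

/-- `W_c²(P,Q)`: infimum over couplings of `∫ c(ξ,ξ')² dπ`. -/
def Wc2 {d : ℕ} (α β : ℝ) (P Q : Measure (Xi d)) : ℝ≥0∞ :=
  ⨅ (pl : Measure (Xi d × Xi d)) (_ : IsCoupling pl P Q),
    ∫⁻ p, (wcost α β p.1 p.2) ^ 2 ∂pl

/-- The empirical measure `P̂^N = (1/N) Σ_i δ_{ξ_i}`. -/
def empMeasure {d N : ℕ} (ξ : Fin N → Xi d) : Measure (Xi d) :=
  ((N : ℝ≥0∞))⁻¹ • ∑ i, Measure.dirac (ξ i)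

/-- The empirical attribute marginal `p̂_b^N = (1/N)#{i : â_i = b}`. -/
def pHat {N : ℕ} (a : Fin N → Bool) (b : Bool) : ℝ :=
  (Finset.univ.filter fun i => a i = b).card / N

/-- `λ(a) = 1_{a=1}/p̂_1^N − 1_{a=0}/p̂_0^N`. -/
def lamHat {N : ℕ} (a : Fin N → Bool) (b : Bool) : ℝ :=
  if b then (pHat a true)⁻¹ else -(pHat a false)⁻¹

/-- `φ(x,a,y) = d(y,R(x))·(1_{a=1}/p̂_1^N − 1_{a=0}/p̂_0^N)`. -/
def phiHat {d N : ℕ} (R : EuclideanSpace ℝ (Fin d) → ℝ) (disc : ℝ → ℝ → ℝ)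
    (a : Fin N → Bool) (ξ : Xi d) : ℝ :=
  disc ξ.2.2 (R ξ.1) * lamHat a ξ.2.1

/-- The fair set `F_R = {Q probability on Ξ : E_Q[φ] = 0}`. -/
def fairSet {d N : ℕ} (R : EuclideanSpace ℝ (Fin d) → ℝ) (disc : ℝ → ℝ → ℝ)
    (a : Fin N → Bool) : Set (Measure (Xi d)) :=
  {Q | IsProbabilityMeasure Q ∧ ∫ ξ, phiHat R disc a ξ ∂Q = 0}

/-- The marginally-constrained fair set `F_R(p̂^N)`. -/
def fairSetM {d N : ℕ} (R : EuclideanSpace ℝ (Fin d) → ℝ) (disc : ℝ → ℝ → ℝ)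
    (a : Fin N → Bool) : Set (Measure (Xi d)) :=
  fairSet R disc a ∩
    {Q | ∀ b : Bool, Q {ξ : Xi d | ξ.2.1 = b} = ENNReal.ofReal (pHat a b)}

lemma emp_attr {d N : ℕ} (hN : 0 < N) (xhat : Fin N → EuclideanSpace ℝ (Fin d))
    (ahat : Fin N → Bool) (yhat : Fin N → ℝ) (b : Bool) :
    (empMeasure fun i => (xhat i, ahat i, yhat i)) {ξ : Xi d | ξ.2.1 = b}
      = ENNReal.ofReal (pHat ahat b) := by
  have hSm : MeasurableSet {ξ : Xi d | ξ.2.1 = b} :=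
    (measurable_fst.comp measurable_snd) (measurableSet_singleton b)
  have hsum : ∑ i, Measure.dirac ((xhat i, ahat i, yhat i) : Xi d) {ξ : Xi d | ξ.2.1 = b}
      = ((Finset.univ.filter fun i => ahat i = b).card : ℝ≥0∞) := by
    rw [Finset.card_filter]
    push_cast
    refine Finset.sum_congr rfl fun i _ => ?_
    rw [Measure.dirac_apply' _ hSm]
    by_cases h : ahat i = b <;> simp [Set.indicator_apply, h]
  have : (empMeasure fun i => (xhat i, ahat i, yhat i)) {ξ : Xi d | ξ.2.1 = b}
      = ((N : ℝ≥0∞))⁻¹ * ((Finset.univ.filter fun i => ahat i = b).card : ℝ≥0∞) := by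
    simp only [empMeasure, Measure.smul_apply, smul_eq_mul, Measure.coe_finset_sum,
      Finset.sum_apply, hsum]
  rw [this, pHat, ENNReal.ofReal_div_of_pos (by exact_mod_cast hN)]
  rw [ENNReal.ofReal_natCast, ENNReal.ofReal_natCast, div_eq_mul_inv, mul_comm]

lemma coupling_marg {d N : ℕ} (hN : 0 < N) (xhat : Fin N → EuclideanSpace ℝ (Fin d))
    (ahat : Fin N → Bool) (yhat : Fin N → ℝ) (α β : ℝ) (Q : Measure (Xi d))
    (pl : Measure (Xi d × Xi d))
    (hc : IsCoupling pl (empMeasure fun i => (xhat i, ahat i, yhat i)) Q)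
    (hfin : ∫⁻ p, (wcost α β p.1 p.2) ^ 2 ∂pl ≠ ⊤) (b : Bool) :
    Q {ξ : Xi d | ξ.2.1 = b} = ENNReal.ofReal (pHat ahat b) := by
  obtain ⟨hprob, hfst, hsnd⟩ := hc
  set S : Set (Xi d × Xi d) := {p | ¬ p.1.2.1 = p.2.2.1} with hS
  have hSm : MeasurableSet S := by
    have : S = (fun p : Xi d × Xi d => (p.1.2.1, p.2.2.1)) ⁻¹' {q : Bool × Bool | ¬ q.1 = q.2} :=
      rfl
    rw [this]
    exact ((Set.to_countable _).measurableSet).preimage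
      ((measurable_fst.snd.fst).prodMk (measurable_snd.snd.fst))
  have hS0 : pl S = 0 := by
    by_contra h
    apply hfin
    have hle : ∀ p : Xi d × Xi d,
        S.indicator (fun _ => (⊤ : ℝ≥0∞)) p ≤ (wcost α β p.1 p.2) ^ 2 := by
      intro p
      by_cases hp : p ∈ S
      · rw [Set.indicator_of_mem hp]
        have : wcost α β p.1 p.2 = ⊤ := by rw [wcost, if_neg hp]
        simp [this]
      · simp [Set.indicator_of_notMem hp]
    have h1 := lintegral_mono (μ := pl) hle
    rw [lintegral_indicator hSm, setLIntegral_const] at h1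
    rw [ENNReal.top_mul h] at h1
    exact top_le_iff.mp h1
  have hae : ∀ᵐ p ∂pl, p.1.2.1 = p.2.2.1 := by
    rw [ae_iff]
    exact hS0
  have hmb : MeasurableSet {ξ : Xi d | ξ.2.1 = b} :=
    (measurable_fst.comp measurable_snd) (measurableSet_singleton b)
  have key : pl {p : Xi d × Xi d | p.2.2.1 = b} = pl {p : Xi d × Xi d | p.1.2.1 = b} := by
    apply measure_congr
    filter_upwards [hae] with p hp
    show (p.2.2.1 = b) = (p.1.2.1 = b)
    rw [hp]
  calc Q {ξ : Xi d | ξ.2.1 = b}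
      = pl.map Prod.snd {ξ : Xi d | ξ.2.1 = b} := by rw [hsnd]
    _ = pl {p : Xi d × Xi d | p.2.2.1 = b} := by
        rw [Measure.map_apply measurable_snd hmb]; rfl
    _ = pl {p : Xi d × Xi d | p.1.2.1 = b} := key
    _ = pl.map Prod.fst {ξ : Xi d | ξ.2.1 = b} := by
        rw [Measure.map_apply measurable_fst hmb]; rfl
    _ = ENNReal.ofReal (pHat ahat b) := by
        rw [hfst]; exact emp_attr hN xhat ahat yhat b

/-- the Wasserstein projection of the empirical distribution onto the fair
set equals its projection onto the marginally-constrained fair set. -/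
theorem statement1 {d N : ℕ} (hN : 0 < N)
    (xhat : Fin N → EuclideanSpace ℝ (Fin d)) (ahat : Fin N → Bool) (yhat : Fin N → ℝ)
    (hboth : (∃ i, ahat i = true) ∧ (∃ i, ahat i = false))
    (α β : ℝ) (hα : 0 ≤ α) (hβ : 0 ≤ β)
    (R : EuclideanSpace ℝ (Fin d) → ℝ) (disc : ℝ → ℝ → ℝ) :
    (⨅ Q ∈ fairSet R disc ahat,
        Wc2 α β (empMeasure fun i => (xhat i, ahat i, yhat i)) Q)
      = ⨅ Q ∈ fairSetM R disc ahat,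
          Wc2 α β (empMeasure fun i => (xhat i, ahat i, yhat i)) Q := by
  apply le_antisymm
  · exact le_iInf₂ fun Q hQ => iInf₂_le Q hQ.1
  · refine le_iInf₂ fun Q hQ => ?_
    by_cases hM : Q ∈ fairSetM R disc ahat
    · exact iInf₂_le Q hM
    · have htop : Wc2 α β (empMeasure fun i => (xhat i, ahat i, yhat i)) Q = ⊤ := by
        rw [Wc2, iInf_eq_top]
        intro pl
        rw [iInf_eq_top]
        intro hc
        by_contra hne
        exact hM ⟨hQ, fun b => coupling_marg hN xhat ahat yhat α β Q pl hc hne b⟩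
      rw [htop]
      exact le_top
end
end

section
/- Interior point (Slater) condition: assume the map (x,y) ↦ d(y,R(x)) is surjective onto the interval [0,ω] with ω > 0, the N sample points ξ̂_i = (x̂_i,â_i,ŷ_i) are pairwise distinct, and both sensitive-attribute values occur among â_1,…,â_N. Define f : Ξ × Ξ̂^N → ℝ^{N+1} by f(ξ,ξ') = (1{ξ' = ξ̂_1}, …, 1{ξ' = ξ̂_N}, φ(ξ)), where Ξ̂^N = {ξ̂_1,…,ξ̂_N}. Then the point q̄ = (1/N, …, 1/N, 0) ∈ ℝ^{N+1} lies in the interior (for the Euclidean topology) of the set { ∫ f(ξ,ξ') dπ(ξ,ξ') : π a finite nonnegative measure on Ξ × Ξ̂^N }. -/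
open MeasureTheory ENNReal Filter Classical
open scoped RealInnerProductSpace BoundedContinuousFunction

noncomputable section

lemma pHat_pos {N : ℕ} (hN : 0 < N) (a : Fin N → Bool) (b : Bool) (h : ∃ i, a i = b) :
    0 < pHat a b := by
  obtain ⟨i, hi⟩ := h
  apply div_pos
  · have : 0 < (Finset.univ.filter fun j => a j = b).card :=
      Finset.card_pos.mpr ⟨i, by simp [hi]⟩
    exact_mod_cast this
  · exact_mod_cast hN

lemma pHat_le_one {N : ℕ} (hN : 0 < N) (a : Fin N → Bool) (b : Bool) : pHat a b ≤ 1 := by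
  rw [pHat, div_le_one (by exact_mod_cast hN)]
  exact_mod_cast (Finset.card_filter_le _ _).trans (by simp)

lemma exists_phi_eq {d N : ℕ} (hN : 0 < N) (ahat : Fin N → Bool)
    (hboth : (∃ i, ahat i = true) ∧ (∃ i, ahat i = false))
    (R : EuclideanSpace ℝ (Fin d) → ℝ) (disc : ℝ → ℝ → ℝ) (ω : ℝ) (hω : 0 < ω)
    (hsurj : Set.range (fun p : EuclideanSpace ℝ (Fin d) × ℝ => disc p.2 (R p.1))
      = Set.Icc 0 ω) (t : ℝ) (ht : |t| ≤ ω) :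
    ∃ ξ : Xi d, phiHat R disc ahat ξ = t := by
  have h1 : 0 < pHat ahat true := pHat_pos hN _ _ hboth.1
  have h0 : 0 < pHat ahat false := pHat_pos hN _ _ hboth.2
  have hle1 : pHat ahat true ≤ 1 := pHat_le_one hN _ _
  have hle0 : pHat ahat false ≤ 1 := pHat_le_one hN _ _
  rcases le_or_gt 0 t with htp | htn
  · have habs : t ≤ ω := (le_abs_self t).trans ht
    have hs : t * pHat ahat true ∈ Set.Icc (0:ℝ) ω :=
      ⟨mul_nonneg htp h1.le, by nlinarith⟩
    rw [← hsurj] at hs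
    obtain ⟨⟨x, y⟩, hxy⟩ := hs
    refine ⟨(x, true, y), ?_⟩
    simp only [phiHat, lamHat, if_true]
    simp only [] at hxy
    rw [show disc y (R x) = _ from hxy, mul_assoc, mul_inv_cancel₀ h1.ne', mul_one]
  · have habs : -t ≤ ω := (neg_le_abs t).trans ht
    have hs : (-t) * pHat ahat false ∈ Set.Icc (0:ℝ) ω :=
      ⟨mul_nonneg (by linarith) h0.le, by nlinarith⟩
    rw [← hsurj] at hs
    obtain ⟨⟨x, y⟩, hxy⟩ := hs
    refine ⟨(x, false, y), ?_⟩
    simp only [phiHat, lamHat, Bool.false_eq_true, if_false]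
    simp only [] at hxy
    rw [show disc y (R x) = _ from hxy, mul_neg, mul_assoc, mul_inv_cancel₀ h0.ne', mul_one, neg_neg]

/-- interior point / Slater condition: the point
`q̄ = (1/N, …, 1/N, 0)` lies in the interior of the set of vectors
`∫ f(ξ,ξ') dπ` over finite nonnegative measures `π` on `Ξ × Ξ̂^N`,
where `f(ξ,ξ') = (1{ξ' = ξ̂_1}, …, 1{ξ' = ξ̂_N}, φ(ξ))`. -/
theorem statement3 {d N : ℕ} (hN : 0 < N)
    (xhat : Fin N → EuclideanSpace ℝ (Fin d)) (ahat : Fin N → Bool) (yhat : Fin N → ℝ)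
    (hboth : (∃ i, ahat i = true) ∧ (∃ i, ahat i = false))
    (R : EuclideanSpace ℝ (Fin d) → ℝ) (disc : ℝ → ℝ → ℝ)
    (ω : ℝ) (hω : 0 < ω)
    (hsurj : Set.range (fun p : EuclideanSpace ℝ (Fin d) × ℝ => disc p.2 (R p.1))
      = Set.Icc 0 ω)
    (hdist : Function.Injective fun i => ((xhat i, ahat i, yhat i) : Xi d)) :
    (fun j : Fin (N + 1) => if (j : ℕ) < N then (1 / N : ℝ) else 0) ∈
      interior {v : Fin (N + 1) → ℝ |
        ∃ pl : Measure (Xi d × Xi d), IsFiniteMeasure pl ∧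
          pl {p : Xi d × Xi d |
            p.2 ∉ Set.range fun i => ((xhat i, ahat i, yhat i) : Xi d)} = 0 ∧
          ∀ j : Fin (N + 1), v j =
            ∫ p, (if h : (j : ℕ) < N then
                (if p.2 = ((xhat ⟨j, h⟩, ahat ⟨j, h⟩, yhat ⟨j, h⟩) : Xi d) then (1 : ℝ) else 0)
              else phiHat R disc ahat p.1) ∂pl} := by
  
  haveI hsc : MeasurableSingletonClass (Xi d) := inferInstance
  haveI : MeasurableSingletonClass (Xi d × Xi d) := Prod.instMeasurableSingletonClass
  have hN' : (0:ℝ) < N := by exact_mod_cast hN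
  set ξhat : Fin N → Xi d := fun i => (xhat i, ahat i, yhat i) with hξhat
  set i0 : Fin N := ⟨0, hN⟩ with hi0
  set U : Set (Fin (N+1) → ℝ) := Set.univ.pi (fun j : Fin (N+1) =>
    if (j : ℕ) < N then Set.Ioi (1/(2*(N:ℝ))) else Set.Ioo (-(ω/(2*(N:ℝ)))) (ω/(2*(N:ℝ)))) with hU
  rw [mem_interior]
  refine ⟨U, ?_, isOpen_set_pi Set.finite_univ (fun j _ => by
    split <;> [exact isOpen_Ioi; exact isOpen_Ioo]), ?_⟩
  · -- U ⊆ S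
    intro v hv
    rw [hU, Set.mem_univ_pi] at hv
    have vpos : ∀ i : Fin N, 0 < v i.castSucc := by
      intro i
      have := hv i.castSucc
      rw [if_pos (by simpa using i.isLt)] at this
      have h2 : (0:ℝ) < 1/(2*(N:ℝ)) := by positivity
      exact lt_trans h2 this
    have hv0 : 1/(2*(N:ℝ)) < v i0.castSucc := by
      have := hv i0.castSucc
      rwa [if_pos (by simpa using i0.isLt)] at this
    have hvlast : |v (Fin.last N)| < ω/(2*(N:ℝ)) := by
      have := hv (Fin.last N)
      rw [if_neg (by simp)] at this
      exact abs_lt.mpr ⟨this.1, this.2⟩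
    set t : ℝ := v (Fin.last N) / v i0.castSucc with htdef
    have ht : |t| ≤ ω := by
      have hvo : 0 < v i0.castSucc := vpos i0
      rw [htdef, abs_div, abs_of_pos hvo, div_le_iff₀ hvo]
      have h1 : ω/(2*(N:ℝ)) ≤ ω * v i0.castSucc := by
        have h2 : ω * (1/(2*(N:ℝ))) ≤ ω * v i0.castSucc :=
          mul_le_mul_of_nonneg_left hv0.le hω.le
        calc ω/(2*(N:ℝ)) = ω * (1/(2*(N:ℝ))) := by ring
        _ ≤ ω * v i0.castSucc := h2
      linarith [hvlast]
    obtain ⟨ζ0, hζ0⟩ := exists_phi_eq hN ahat hboth R disc ω hω hsurj t ht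
    obtain ⟨ζz, hζz⟩ := exists_phi_eq hN ahat hboth R disc ω hω hsurj 0 (by simp [hω.le])
    set ζ : Fin N → Xi d := fun i => if i = i0 then ζ0 else ζz with hζ
    set π : Measure (Xi d × Xi d) :=
      ∑ i : Fin N, (ENNReal.ofReal (v i.castSucc)) • Measure.dirac ((ζ i, ξhat i)) with hπ
    have key : ∀ f : Xi d × Xi d → ℝ,
        ∫ p, f p ∂π = ∑ i : Fin N, v i.castSucc * f (ζ i, ξhat i) := by
      intro f
      rw [hπ, integral_finset_sum_measure]
      · refine Finset.sum_congr rfl fun i _ => ?_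
        rw [integral_smul_measure, integral_dirac,
          ENNReal.toReal_ofReal (vpos i).le, smul_eq_mul]
      · intro i _
        exact ((integrable_const (f (ζ i, ξhat i))).congr
          (ae_eq_dirac f).symm).smul_measure ENNReal.ofReal_ne_top
    refine ⟨π, ?_, ?_, ?_⟩
    · refine ⟨?_⟩
      rw [hπ, Measure.finset_sum_apply]
      refine ENNReal.sum_lt_top.mpr (fun i _ => ?_)
      rw [Measure.smul_apply, smul_eq_mul]
      exact ENNReal.mul_lt_top ENNReal.ofReal_lt_top (measure_lt_top _ _)
    · rw [hπ, Measure.finset_sum_apply]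
      refine Finset.sum_eq_zero fun i _ => ?_
      rw [Measure.smul_apply, Measure.dirac_apply]
      have hmem : ((ζ i, ξhat i) : Xi d × Xi d) ∉
          {p : Xi d × Xi d | p.2 ∉ Set.range fun i => ((xhat i, ahat i, yhat i) : Xi d)} := by
        simp only [Set.mem_setOf_eq, not_not]
        exact ⟨i, rfl⟩
      rw [Set.indicator_of_notMem hmem]
      simp
    · intro j
      by_cases h : (j : ℕ) < N
      · simp only [dif_pos h]
        rw [key]
        have hcast : (Fin.castSucc (⟨(j:ℕ), h⟩ : Fin N)) = j := Fin.ext rfl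
        have hsum : (∑ i : Fin N,
            v i.castSucc * (if ξhat i = ξhat ⟨(j:ℕ), h⟩ then (1:ℝ) else 0)) = v j := by
          have hstep : ∀ i : Fin N,
              v i.castSucc * (if ξhat i = ξhat ⟨(j:ℕ), h⟩ then (1:ℝ) else 0)
                = if i = ⟨(j:ℕ), h⟩ then v i.castSucc else 0 := by
            intro i
            by_cases hij : i = ⟨(j:ℕ), h⟩
            · subst hij; simp
            · rw [if_neg hij, if_neg (fun hcon => hij (hdist hcon)), mul_zero]
          rw [Finset.sum_congr rfl fun i _ => hstep i,
            Finset.sum_ite_eq' Finset.univ (⟨(j:ℕ), h⟩ : Fin N) (fun i => v i.castSucc),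
            if_pos (Finset.mem_univ _), hcast]
        exact hsum.symm
      · simp only [dif_neg h]
        rw [key]
        have hj : j = Fin.last N := by
          apply Fin.ext
          have := j.isLt
          simp only [Fin.val_last]
          omega
        have hsum : (∑ i : Fin N, v i.castSucc * phiHat R disc ahat (ζ i)) = v j := by
          have hstep : ∀ i : Fin N,
              v i.castSucc * phiHat R disc ahat (ζ i)
                = if i = i0 then v i.castSucc * t else 0 := by
            intro i
            by_cases hii : i = i0
            · subst hii
              simp [hζ, hζ0]
            · rw [if_neg hii, hζ]
              simp only [if_neg hii, hζz, mul_zero]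
          rw [Finset.sum_congr rfl fun i _ => hstep i,
            Finset.sum_ite_eq' Finset.univ i0 (fun i => v i.castSucc * t),
            if_pos (Finset.mem_univ _), hj, htdef, mul_comm,
            div_mul_cancel₀ _ (vpos i0).ne']
        exact hsum.symm
  · -- membership of qbar in U
    rw [hU, Set.mem_univ_pi]
    intro j
    by_cases h : (j : ℕ) < N
    · simp only [if_pos h, Set.mem_Ioi]
      rw [div_lt_div_iff₀ (by positivity) hN']
      nlinarith
    · simp only [if_neg h, Set.mem_Ioo]
      refine ⟨?_, ?_⟩
      · have : (0:ℝ) < ω/(2*(N:ℝ)) := by positivity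
        linarith
      · positivity
end
end

section
/- Finite-dimensional saddle-point identity: let ρ ∈ ℝ^d with ρ ≠ 0, σ ∈ ℝ, and let (x̂_i, â_i) ∈ ℝ^d × {0,1}, i = 1,…,N, with both attribute values present. Then (1/N) · sup_{γ ∈ ℝ} Σ_{i=1}^N inf_{x ∈ ℝ^d} [ ‖x − x̂_i‖² + γ λ(â_i)(ρᵀx + σ) ] = ( Σ_{i=1}^N λ(â_i)(ρᵀx̂_i + σ) )² / ( N ‖ρ‖² Σ_{i=1}^N λ(â_i)² ), and the supremum is attained at γ* = 2 Σ_{i=1}^N λ(â_i)(ρᵀx̂_i + σ) / ( ‖ρ‖² Σ_{i=1}^N λ(â_i)² ). -/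
open MeasureTheory Filter
open scoped RealInnerProductSpace

noncomputable section

lemma key_lb {d : ℕ} (ρ y : EuclideanSpace ℝ (Fin d)) (σ c : ℝ)
    (x : EuclideanSpace ℝ (Fin d)) :
    c * (⟪ρ, y⟫ + σ) - c ^ 2 * ‖ρ‖ ^ 2 / 4 ≤ ‖x - y‖ ^ 2 + c * (⟪ρ, x⟫ + σ) := by
  have h := norm_add_sq_real (x - y) ((c / 2) • ρ)
  have h2 : (0:ℝ) ≤ ‖x - y + (c / 2) • ρ‖ ^ 2 := sq_nonneg _
  have h3 : ⟪x - y, (c / 2) • ρ⟫ = (c / 2) * (⟪ρ, x⟫ - ⟪ρ, y⟫) := by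
    rw [real_inner_smul_right, inner_sub_left, real_inner_comm x ρ, real_inner_comm y ρ]
  have h4 : ‖(c / 2) • ρ‖ ^ 2 = (c / 2) ^ 2 * ‖ρ‖ ^ 2 := by
    rw [norm_smul, mul_pow, Real.norm_eq_abs, sq_abs]
  nlinarith [h2, h]

lemma inf_quad {d : ℕ} (ρ y : EuclideanSpace ℝ (Fin d)) (σ c : ℝ) :
    (⨅ x : EuclideanSpace ℝ (Fin d), (‖x - y‖ ^ 2 + c * (⟪ρ, x⟫ + σ)))
      = c * (⟪ρ, y⟫ + σ) - c ^ 2 * ‖ρ‖ ^ 2 / 4 := by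
  apply le_antisymm
  · have := ciInf_le ⟨_, fun z hz => by
      obtain ⟨x, rfl⟩ := hz; exact key_lb ρ y σ c x⟩ (y - (c / 2) • ρ)
    refine this.trans_eq ?_
    have h1 : ‖y - (c / 2) • ρ - y‖ ^ 2 = (c / 2) ^ 2 * ‖ρ‖ ^ 2 := by
      have h0 : y - (c / 2) • ρ - y = -((c / 2) • ρ) := by abel
      rw [h0, norm_neg, norm_smul, mul_pow, Real.norm_eq_abs, sq_abs]
    have h2 : ⟪ρ, y - (c / 2) • ρ⟫ = ⟪ρ, y⟫ - (c / 2) * ‖ρ‖ ^ 2 := by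
      rw [inner_sub_right, real_inner_smul_right, real_inner_self_eq_norm_sq]
    rw [h1, h2]; ring
  · exact le_ciInf (key_lb ρ y σ c)

/-- finite-dimensional saddle-point identity:
`(1/N)·sup_γ Σ_i inf_x [‖x−x̂_i‖² + γλ(â_i)(ρᵀx+σ)]
  = (Σ_i λ(â_i)(ρᵀx̂_i+σ))² / (N‖ρ‖² Σ_i λ(â_i)²)`,
and the supremum is attained at `γ*`. -/
theorem statement6 {d N : ℕ} (hN : 0 < N)
    (ρ : EuclideanSpace ℝ (Fin d)) (hρ : ρ ≠ 0) (σ : ℝ)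
    (xhat : Fin N → EuclideanSpace ℝ (Fin d)) (ahat : Fin N → Bool)
    (hboth : (∃ i, ahat i = true) ∧ (∃ i, ahat i = false))
    (γstar : ℝ)
    (hγ : γstar = 2 * (∑ i, lamHat ahat (ahat i) * (⟪ρ, xhat i⟫ + σ)) /
      (‖ρ‖ ^ 2 * ∑ i, lamHat ahat (ahat i) ^ 2)) :
    ((N : ℝ)⁻¹ * ⨆ γ : ℝ, ∑ i, ⨅ x : EuclideanSpace ℝ (Fin d),
        (‖x - xhat i‖ ^ 2 + γ * lamHat ahat (ahat i) * (⟪ρ, x⟫ + σ))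
      = (∑ i, lamHat ahat (ahat i) * (⟪ρ, xhat i⟫ + σ)) ^ 2 /
        ((N : ℝ) * ‖ρ‖ ^ 2 * ∑ i, lamHat ahat (ahat i) ^ 2))
    ∧ (∑ i, ⨅ x : EuclideanSpace ℝ (Fin d),
        (‖x - xhat i‖ ^ 2 + γstar * lamHat ahat (ahat i) * (⟪ρ, x⟫ + σ)))
      = ⨆ γ : ℝ, ∑ i, ⨅ x : EuclideanSpace ℝ (Fin d),
          (‖x - xhat i‖ ^ 2 + γ * lamHat ahat (ahat i) * (⟪ρ, x⟫ + σ)) := by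
  obtain ⟨⟨i₁, hi₁⟩, ⟨i₀, hi₀⟩⟩ := hboth
  set S := ∑ i, lamHat ahat (ahat i) * (⟪ρ, xhat i⟫ + σ) with hS
  set L := ∑ i, lamHat ahat (ahat i) ^ 2 with hLdef
  have hNpos : (0:ℝ) < N := Nat.cast_pos.2 hN
  have hpt : 0 < pHat ahat true :=
    div_pos (Nat.cast_pos.2 (Finset.card_pos.2 ⟨i₁, by simp [hi₁]⟩)) hNpos
  have hpf : 0 < pHat ahat false :=
    div_pos (Nat.cast_pos.2 (Finset.card_pos.2 ⟨i₀, by simp [hi₀]⟩)) hNpos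
  have hlam : ∀ i, lamHat ahat (ahat i) ≠ 0 := by
    intro i
    unfold lamHat
    cases h : ahat i <;> simp [hpt.ne', hpf.ne']
  have hL : 0 < L := by
    refine Finset.sum_pos (fun i _ => ?_) ⟨i₁, Finset.mem_univ i₁⟩
    exact (pow_ne_zero 2 (hlam i)).symm.lt_of_le (sq_nonneg _)
  have hB : (0:ℝ) < ‖ρ‖ ^ 2 := pow_pos (norm_pos_iff.2 hρ) 2
  have hBL : (0:ℝ) < ‖ρ‖ ^ 2 * L := mul_pos hB hL
  -- sum of infima in closed form
  have hsum : ∀ γ : ℝ, (∑ i, ⨅ x : EuclideanSpace ℝ (Fin d),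
      (‖x - xhat i‖ ^ 2 + γ * lamHat ahat (ahat i) * (⟪ρ, x⟫ + σ)))
      = γ * S - γ ^ 2 * (‖ρ‖ ^ 2 * L) / 4 := by
    intro γ
    have : ∀ i : Fin N, (⨅ x : EuclideanSpace ℝ (Fin d),
        (‖x - xhat i‖ ^ 2 + γ * lamHat ahat (ahat i) * (⟪ρ, x⟫ + σ)))
        = γ * (lamHat ahat (ahat i) * (⟪ρ, xhat i⟫ + σ))
          - γ ^ 2 * ‖ρ‖ ^ 2 / 4 * lamHat ahat (ahat i) ^ 2 := by
      intro i
      rw [inf_quad ρ (xhat i) σ (γ * lamHat ahat (ahat i))]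
      ring
    rw [Finset.sum_congr rfl fun i _ => this i, Finset.sum_sub_distrib,
      ← Finset.mul_sum, ← Finset.mul_sum, ← hS, ← hLdef]
    ring
  have hub : ∀ γ : ℝ, γ * S - γ ^ 2 * (‖ρ‖ ^ 2 * L) / 4 ≤ S ^ 2 / (‖ρ‖ ^ 2 * L) := by
    intro γ
    rw [le_div_iff₀ hBL]
    nlinarith [sq_nonneg (γ * (‖ρ‖ ^ 2 * L) - 2 * S), hBL]
  have hstar : γstar * S - γstar ^ 2 * (‖ρ‖ ^ 2 * L) / 4 = S ^ 2 / (‖ρ‖ ^ 2 * L) := by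
    rw [hγ]
    field_simp
    ring
  have hbdd : BddAbove (Set.range fun γ : ℝ => ∑ i, ⨅ x : EuclideanSpace ℝ (Fin d),
      (‖x - xhat i‖ ^ 2 + γ * lamHat ahat (ahat i) * (⟪ρ, x⟫ + σ))) := by
    refine ⟨S ^ 2 / (‖ρ‖ ^ 2 * L), Set.forall_mem_range.2 fun γ => ?_⟩
    rw [hsum γ]; exact hub γ
  have hsup : (⨆ γ : ℝ, ∑ i, ⨅ x : EuclideanSpace ℝ (Fin d),
      (‖x - xhat i‖ ^ 2 + γ * lamHat ahat (ahat i) * (⟪ρ, x⟫ + σ)))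
      = S ^ 2 / (‖ρ‖ ^ 2 * L) := by
    apply le_antisymm
    · exact ciSup_le fun γ => by rw [hsum γ]; exact hub γ
    · rw [← hstar, ← hsum γstar]
      exact le_ciSup hbdd γstar
  constructor
  · rw [hsup, inv_mul_eq_div, div_div]
    congr 1
    ring
  · rw [hsup, hsum γstar, hstar]

end
end

section
/- Full fairness at η = 1: in the setting of the optimal data perturbation for linear regression and the equal-mean criterion, with γ* = 2 Σ_{i=1}^N λ(â_i)(ρᵀx̂_i + σ) / ( ‖ρ‖² Σ_{i=1}^N λ(â_i)² ) and perturbed features x_i^1 = x̂_i − (1/2) γ* λ(â_i) ρ, the perturbed predictions satisfy exact equal mean across groups: (1/#{i : â_i = 1}) Σ_{i : â_i = 1} (ρᵀ x_i^1 + σ) = (1/#{i : â_i = 0}) Σ_{i : â_i = 0} (ρᵀ x_i^1 + σ). -/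
open MeasureTheory Filter
open scoped RealInnerProductSpace

noncomputable section

/-- full fairness at `η = 1`: with `x_i^1 = x̂_i − (1/2)γ*λ(â_i)ρ`, the
perturbed predictions have exactly equal group means:
`(1/#{â_i=1}) Σ_{â_i=1} (ρᵀx_i^1 + σ) = (1/#{â_i=0}) Σ_{â_i=0} (ρᵀx_i^1 + σ)`. -/
theorem statement13 {d N : ℕ} (hN : 0 < N)
    (ρ : EuclideanSpace ℝ (Fin d)) (hρ : ρ ≠ 0) (σ : ℝ)
    (xhat : Fin N → EuclideanSpace ℝ (Fin d)) (ahat : Fin N → Bool)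
    (hboth : (∃ i, ahat i = true) ∧ (∃ i, ahat i = false))
    (γstar : ℝ)
    (hγ : γstar = 2 * (∑ i, lamHat ahat (ahat i) * (⟪ρ, xhat i⟫ + σ)) /
      (‖ρ‖ ^ 2 * ∑ i, lamHat ahat (ahat i) ^ 2))
    (xper : Fin N → EuclideanSpace ℝ (Fin d))
    (hx : ∀ i, xper i = xhat i - ((1 / 2) * γstar * lamHat ahat (ahat i)) • ρ) :
    ((Finset.univ.filter fun i => ahat i = true).card : ℝ)⁻¹ *
        ∑ i ∈ Finset.univ.filter fun i => ahat i = true, (⟪ρ, xper i⟫ + σ)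
      = ((Finset.univ.filter fun i => ahat i = false).card : ℝ)⁻¹ *
          ∑ i ∈ Finset.univ.filter fun i => ahat i = false, (⟪ρ, xper i⟫ + σ) := by
  classical
  set T := Finset.univ.filter fun i => ahat i = true with hT
  set F := Finset.univ.filter fun i => ahat i = false with hF
  obtain ⟨⟨i1, hi1⟩, ⟨i0, hi0⟩⟩ := hboth
  have hTne : T.Nonempty := ⟨i1, by simp [hT, hi1]⟩
  have hFne : F.Nonempty := ⟨i0, by simp [hF, hi0]⟩
  have hc1 : (0:ℝ) < T.card := by exact_mod_cast Finset.card_pos.mpr hTne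
  have hc0 : (0:ℝ) < F.card := by exact_mod_cast Finset.card_pos.mpr hFne
  have hNp : (0:ℝ) < N := by exact_mod_cast hN
  have hl1 : lamHat ahat true = N / T.card := by
    simp [lamHat, pHat, inv_div, hT]
  have hl0 : lamHat ahat false = -(N / F.card) := by
    simp [lamHat, pHat, inv_div, hF]
  have hρpos : (0:ℝ) < ‖ρ‖ := norm_pos_iff.mpr hρ
  have hρn : (0:ℝ) < ‖ρ‖ ^ 2 := by positivity
  have hQ : (0:ℝ) < ∑ i, lamHat ahat (ahat i) ^ 2 := by
    apply Finset.sum_pos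
    · intro i _
      cases h : ahat i
      · rw [hl0, neg_sq]; exact pow_pos (div_pos hNp hc0) 2
      · rw [hl1]; exact pow_pos (div_pos hNp hc1) 2
    · exact ⟨i1, Finset.mem_univ i1⟩
  set S := ∑ i, lamHat ahat (ahat i) * (⟪ρ, xhat i⟫ + σ) with hS
  set Q := ∑ i, lamHat ahat (ahat i) ^ 2 with hQdef
  have hg : ∀ i, (⟪ρ, xper i⟫ + σ)
      = (⟪ρ, xhat i⟫ + σ) - (1/2)*γstar*lamHat ahat (ahat i)*‖ρ‖^2 := by
    intro i
    rw [hx i, inner_sub_right, real_inner_smul_right, real_inner_self_eq_norm_sq]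
    ring
  have hsum : ∑ i, lamHat ahat (ahat i) * (⟪ρ, xper i⟫ + σ) = 0 := by
    have h1 : ∑ i, lamHat ahat (ahat i) * (⟪ρ, xper i⟫ + σ)
        = S - (1/2)*γstar*‖ρ‖^2 * Q := by
      calc ∑ i, lamHat ahat (ahat i) * (⟪ρ, xper i⟫ + σ)
          = ∑ i, (lamHat ahat (ahat i) * (⟪ρ, xhat i⟫ + σ)
              - (1/2)*γstar*‖ρ‖^2 * lamHat ahat (ahat i)^2) := by
            apply Finset.sum_congr rfl; intro i _; rw [hg i]; ring
        _ = S - (1/2)*γstar*‖ρ‖^2 * Q := by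
            rw [Finset.sum_sub_distrib, ← Finset.mul_sum, hS, hQdef]
    rw [h1, hγ]
    have hQ' : Q ≠ 0 := ne_of_gt hQ
    have hρ' : ‖ρ‖ ^ 2 ≠ 0 := ne_of_gt hρn
    field_simp
    ring
  have h1 : ∑ i ∈ T, lamHat ahat (ahat i) * (⟪ρ, xper i⟫ + σ)
      = ((N:ℝ) / T.card) * ∑ i ∈ T, (⟪ρ, xper i⟫ + σ) := by
    rw [Finset.mul_sum]
    apply Finset.sum_congr rfl; intro i hi
    rw [hT] at hi
    rw [(Finset.mem_filter.mp hi).2, hl1]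
  have h0 : ∑ i ∈ F, lamHat ahat (ahat i) * (⟪ρ, xper i⟫ + σ)
      = -(((N:ℝ) / F.card) * ∑ i ∈ F, (⟪ρ, xper i⟫ + σ)) := by
    rw [Finset.mul_sum, ← Finset.sum_neg_distrib]
    apply Finset.sum_congr rfl; intro i hi
    rw [hF] at hi
    rw [(Finset.mem_filter.mp hi).2, hl0]
    ring
  have hsplit : ∑ i, lamHat ahat (ahat i) * (⟪ρ, xper i⟫ + σ)
      = ∑ i ∈ T, lamHat ahat (ahat i) * (⟪ρ, xper i⟫ + σ)
        + ∑ i ∈ F, lamHat ahat (ahat i) * (⟪ρ, xper i⟫ + σ) := by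
    have hFeq : F = Finset.univ.filter fun i => ¬ (ahat i = true) := by
      rw [hF]; apply Finset.filter_congr; intro i _; simp
    rw [← Finset.sum_filter_add_sum_filter_not Finset.univ (fun i => ahat i = true), ← hT, ← hFeq]
  rw [hsplit, h1, h0] at hsum
  have hkey : ((N:ℝ) / T.card) * ∑ i ∈ T, (⟪ρ, xper i⟫ + σ)
      = ((N:ℝ) / F.card) * ∑ i ∈ F, (⟪ρ, xper i⟫ + σ) := by linarith
  have hN' : (N:ℝ) ≠ 0 := ne_of_gt hNp
  have hc1' : (T.card : ℝ) ≠ 0 := ne_of_gt hc1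
  have hc0' : (F.card : ℝ) ≠ 0 := ne_of_gt hc0
  have e1 : ∀ (c x : ℝ), c ≠ 0 → (N:ℝ)⁻¹ * (((N:ℝ)/c)*x) = c⁻¹ * x := by
    intro c x hc; field_simp
  calc ((T.card:ℝ))⁻¹ * ∑ i ∈ T, (⟪ρ, xper i⟫ + σ)
      = (N:ℝ)⁻¹ * (((N:ℝ)/T.card) * ∑ i ∈ T, (⟪ρ, xper i⟫ + σ)) := (e1 _ _ hc1').symm
    _ = (N:ℝ)⁻¹ * (((N:ℝ)/F.card) * ∑ i ∈ F, (⟪ρ, xper i⟫ + σ)) := by rw [hkey]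
    _ = ((F.card:ℝ))⁻¹ * ∑ i ∈ F, (⟪ρ, xper i⟫ + σ) := e1 _ _ hc0'
end
end
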